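/- arXiv:1803.07676 — 2 statements merged into one kernel-verified Lean document; each statement's English description precedes it below -/
import Mathlib

section
/- Let X be an invertible object of a symmetric monoidal category C. Then there exists a morphism τ : 𝟙 ⟶ 𝟙 with τ ≫ τ = id_𝟙 such that the braiding on X is given by acting with τ through the left unitor: β_{X,X} = (λ_{X⊗X}).inv ≫ (τ ⊗ id_{X⊗X}) ≫ (λ_{X⊗X}).hom. -/
/-!
Scalars `s : 𝟙 ⟶ 𝟙` act on every object through the left unitor, naturally in the object, and on
an object `A ≅ 𝟙` the action of `s` is `s` conjugated by that isomorphism. Whiskering `- ▷ W` is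
faithful as soon as `W ⊗ V ≅ 𝟙` for some `V`; in a braided category `A ⊗ W ≅ 𝟙` gives this with
`V = A`, so every `f : A ⟶ A` is the action of the scalar obtained by conjugating `f ▷ W` to `𝟙`. For `A = X ⊗ X`, `W = Y ⊗ Y`
and `f = β_{X,X}` this scalar squares to the identity because `β_{X,X}` does.
-/

open CategoryTheory MonoidalCategory

section Monoidal

variable {C : Type*} [Category C] [MonoidalCategory C]

def scalarAction (s : 𝟙_ C ⟶ 𝟙_ C) (A : C) : A ⟶ A :=
  (λ_ A).inv ≫ s ▷ A ≫ (λ_ A).hom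

theorem scalarAction_naturality (s : 𝟙_ C ⟶ 𝟙_ C) {A B : C} (f : A ⟶ B) :
    scalarAction s A ≫ f = f ≫ scalarAction s B := by
  rw [scalarAction, scalarAction, Category.assoc, Category.assoc, ← leftUnitor_naturality,
    ← whisker_exchange_assoc, ← leftUnitor_inv_naturality_assoc]

theorem scalarAction_unit (s : 𝟙_ C ⟶ 𝟙_ C) : scalarAction s (𝟙_ C) = s := by
  simp [scalarAction, unitors_equal, unitors_inv_equal]

theorem scalarAction_eq_of_iso_unit (s : 𝟙_ C ⟶ 𝟙_ C) {A : C} (i : A ≅ 𝟙_ C) :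
    scalarAction s A = i.hom ≫ s ≫ i.inv := by
  rw [← cancel_mono i.hom]
  simpa [scalarAction_unit] using scalarAction_naturality s i.hom

theorem scalarAction_tensor (s : 𝟙_ C ⟶ 𝟙_ C) (A B : C) :
    scalarAction s (A ⊗ B) = scalarAction s A ▷ B := by
  simp [scalarAction]

theorem whiskerRight_injective_of_tensor_iso_unit {W V : C} (j : W ⊗ V ≅ 𝟙_ C) {A B : C}
    {g h : A ⟶ B} (H : g ▷ W = h ▷ W) : g = h := by
  have conj_eq : ∀ f : A ⟶ B, f = (ρ_ A).inv ≫ A ◁ j.inv ≫ (α_ A W V).inv ≫ (f ▷ W) ▷ V ≫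
      (α_ B W V).hom ≫ B ◁ j.hom ≫ (ρ_ B).hom := by
    intro f
    rw [← whiskerRight_tensor_assoc, ← whisker_exchange_assoc, whiskerLeft_inv_hom_assoc]
    simp
  rw [conj_eq g, conj_eq h, H]

end Monoidal

section Braided

variable {C : Type*} [Category C] [MonoidalCategory C] [BraidedCategory C]

theorem eq_scalarAction_of_tensor_iso_unit {A W : C} (i : A ⊗ W ≅ 𝟙_ C) (f : A ⟶ A) :
    f = scalarAction (i.inv ≫ f ▷ W ≫ i.hom) A := by
  apply whiskerRight_injective_of_tensor_iso_unit (β_ W A ≪≫ i)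
  rw [← scalarAction_tensor, scalarAction_eq_of_iso_unit _ i]
  simp

end Braided

theorem braiding_of_invertible_general {C : Type*} [Category C] [MonoidalCategory C]
    [SymmetricCategory C] (X Y : C) (e : X ⊗ Y ≅ 𝟙_ C) :
    ∃ τ : 𝟙_ C ⟶ 𝟙_ C, τ ≫ τ = 𝟙 (𝟙_ C) ∧
      (β_ X X).hom =
        (λ_ (X ⊗ X)).inv ≫ (τ ⊗ₘ 𝟙 (X ⊗ X)) ≫ (λ_ (X ⊗ X)).hom := by
  let i : (X ⊗ X) ⊗ (Y ⊗ Y) ≅ 𝟙_ C :=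
    α_ X X (Y ⊗ Y) ≪≫ whiskerLeftIso X ((α_ X Y Y).symm ≪≫ whiskerRightIso e Y ≪≫ λ_ Y) ≪≫ e
  refine ⟨i.inv ≫ (β_ X X).hom ▷ (Y ⊗ Y) ≫ i.hom, ?_, ?_⟩
  · simp only [Category.assoc, Iso.hom_inv_id_assoc]
    rw [← comp_whiskerRight_assoc, SymmetricCategory.symmetry]
    simp
  · rw [tensorHom_id]
    exact eq_scalarAction_of_tensor_iso_unit i _

/-- For an invertible object `X` of a symmetric monoidal category, the braiding
`β_{X,X}` is given by the action (through the left unitor) of an involutive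
element `τ` of the endomorphism monoid of the unit. -/
theorem braiding_of_invertible {C : Type*} [Category C] [MonoidalCategory C]
    [SymmetricCategory C] (X Y : C) (e : X ⊗ Y ≅ 𝟙_ C) (e' : Y ⊗ X ≅ 𝟙_ C) :
    ∃ τ : 𝟙_ C ⟶ 𝟙_ C, τ ≫ τ = 𝟙 (𝟙_ C) ∧
      (β_ X X).hom =
        (λ_ (X ⊗ X)).inv ≫ (τ ⊗ₘ 𝟙 (X ⊗ X)) ≫ (λ_ (X ⊗ X)).hom :=
  braiding_of_invertible_general X Y e
end

section
/- Let X be an invertible object of a symmetric monoidal category C. Then there exists a morphism τ : 𝟙 ⟶ 𝟙 with τ ≫ τ = id_𝟙 such that for all morphisms f, g : 𝟙 ⟶ X one has g ⊗ f = (f ⊗ g) ≫ (λ_{X⊗X}).inv ≫ (τ ⊗ id_{X⊗X}) ≫ (λ_{X⊗X}).hom; i.e., the two products of f and g agree up to the sign element τ, which depends only on X and not on f and g. -/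
/-!
For an invertible object `Z`, acting by scalars `τ ↦ λ⁻¹ ≫ (τ ▷ Z) ≫ λ` is a monoid isomorphism
`End (𝟙) ≅ End Z`, with inverse conjugating `φ ▷ W` by `Z ⊗ W ≅ 𝟙`. Applied to `Z = X ⊗ X`, the
involution `β_{X,X}` is therefore the action of an involutive scalar `τ`, and naturality of the
braiding turns `f ⊗ g` into `g ⊗ f`.
-/

open CategoryTheory MonoidalCategory

namespace CategoryTheory.MonoidalCategory

variable {C : Type*} [Category C] [MonoidalCategory C]

def scalarAct (τ : 𝟙_ C ⟶ 𝟙_ C) (A : C) : A ⟶ A :=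
  (λ_ A).inv ≫ τ ▷ A ≫ (λ_ A).hom

lemma scalarAct_naturality (τ : 𝟙_ C ⟶ 𝟙_ C) {A B : C} (q : A ⟶ B) :
    scalarAct τ A ≫ q = q ≫ scalarAct τ B := by
  simp only [scalarAct, Category.assoc]
  rw [← leftUnitor_naturality, ← whisker_exchange_assoc]
  simp

lemma scalarAct_tensorUnit (τ : 𝟙_ C ⟶ 𝟙_ C) : scalarAct τ (𝟙_ C) = τ := by
  simp [scalarAct, unitors_equal, unitors_inv_equal]

lemma scalarAct_whiskerRight (τ : 𝟙_ C ⟶ 𝟙_ C) (A B : C) :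
    scalarAct τ A ▷ B = scalarAct τ (A ⊗ B) := by
  simp only [scalarAct, comp_whiskerRight, Category.assoc, leftUnitor_tensor_hom,
    leftUnitor_tensor_inv]
  simp

lemma scalarAct_eq_conj {A : C} (e : A ≅ 𝟙_ C) (τ : 𝟙_ C ⟶ 𝟙_ C) :
    scalarAct τ A = e.hom ≫ τ ≫ e.inv := by
  simpa [scalarAct_tensorUnit] using congrArg (· ≫ e.inv) (scalarAct_naturality τ e.hom)

lemma whiskerRight_cancel_of_iso_unit {A B D : C} (v : D ≅ 𝟙_ C) {f g : A ⟶ B}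
    (h : f ▷ D = g ▷ D) : f = g := by
  have conj : ∀ k : A ⟶ B,
      k = (ρ_ A).inv ≫ A ◁ v.inv ≫ k ▷ D ≫ B ◁ v.hom ≫ (ρ_ B).hom := by
    intro k
    rw [whisker_exchange_assoc]
    simp
  rw [conj f, conj g, h]

lemma whiskerRight_cancel_of_tensor_iso_unit {A B D E : C} (v : D ⊗ E ≅ 𝟙_ C)
    {f g : A ⟶ B} (h : f ▷ D = g ▷ D) : f = g := by
  apply whiskerRight_cancel_of_iso_unit v
  rw [whiskerRight_tensor, whiskerRight_tensor, h]

def tensorIsoUnitOfIsoUnit {X Y X' Y' : C} (e : X ⊗ Y ≅ 𝟙_ C) (e' : X' ⊗ Y' ≅ 𝟙_ C) :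
    (X ⊗ X') ⊗ (Y' ⊗ Y) ≅ 𝟙_ C :=
  α_ X X' (Y' ⊗ Y) ≪≫
    whiskerLeftIso X ((α_ X' Y' Y).symm ≪≫ whiskerRightIso e' Y ≪≫ λ_ Y) ≪≫ e

section Scalar

variable {Z W : C} (e : Z ⊗ W ≅ 𝟙_ C)

def scalarOfEnd (φ : Z ⟶ Z) : 𝟙_ C ⟶ 𝟙_ C :=
  e.inv ≫ φ ▷ W ≫ e.hom

lemma scalarOfEnd_id : scalarOfEnd e (𝟙 Z) = 𝟙 (𝟙_ C) := by
  simp [scalarOfEnd]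

lemma scalarOfEnd_comp (φ ψ : Z ⟶ Z) :
    scalarOfEnd e φ ≫ scalarOfEnd e ψ = scalarOfEnd e (φ ≫ ψ) := by
  simp [scalarOfEnd]

lemma scalarAct_scalarOfEnd [BraidedCategory C] (φ : Z ⟶ Z) :
    scalarAct (scalarOfEnd e φ) Z = φ := by
  apply whiskerRight_cancel_of_tensor_iso_unit (β_ W Z ≪≫ e)
  rw [scalarAct_whiskerRight, scalarAct_eq_conj e, scalarOfEnd]
  simp

end Scalar

lemma tensorHom_comp_braiding_of_unit [BraidedCategory C] {X Y : C}
    (f : 𝟙_ C ⟶ X) (g : 𝟙_ C ⟶ Y) : (f ⊗ₘ g) ≫ (β_ X Y).hom = g ⊗ₘ f := by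
  rw [BraidedCategory.braiding_naturality, braiding_tensorUnit_left]
  simp [unitors_equal]

end CategoryTheory.MonoidalCategory

theorem dugger_sign_rule_general {C : Type*} [Category C] [MonoidalCategory C]
    [SymmetricCategory C] (X Y : C) (e : X ⊗ Y ≅ 𝟙_ C) :
    ∃ τ : 𝟙_ C ⟶ 𝟙_ C, τ ≫ τ = 𝟙 (𝟙_ C) ∧
      ∀ f g : 𝟙_ C ⟶ X,
        g ⊗ₘ f =
          (f ⊗ₘ g) ≫ (λ_ (X ⊗ X)).inv ≫ (τ ⊗ₘ 𝟙 (X ⊗ X)) ≫ (λ_ (X ⊗ X)).hom := by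
  let u := tensorIsoUnitOfIsoUnit e e
  refine ⟨scalarOfEnd u (β_ X X).hom, ?_, fun f g => ?_⟩
  · rw [scalarOfEnd_comp, SymmetricCategory.symmetry, scalarOfEnd_id]
  · rw [tensorHom_id, ← scalarAct, scalarAct_scalarOfEnd, tensorHom_comp_braiding_of_unit]

/-- For an invertible object `X` of a symmetric monoidal category, the two
products `f ⊗ g` and `g ⊗ f` of morphisms `f, g : 𝟙 ⟶ X` agree up to a sign
element `τ : 𝟙 ⟶ 𝟙` with `τ ≫ τ = 𝟙`, depending only on `X` (Dugger's sign
rule, `n = 1` case). -/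
theorem dugger_sign_rule {C : Type*} [Category C] [MonoidalCategory C]
    [SymmetricCategory C] (X Y : C) (e : X ⊗ Y ≅ 𝟙_ C) (e' : Y ⊗ X ≅ 𝟙_ C) :
    ∃ τ : 𝟙_ C ⟶ 𝟙_ C, τ ≫ τ = 𝟙 (𝟙_ C) ∧
      ∀ f g : 𝟙_ C ⟶ X,
        g ⊗ₘ f =
          (f ⊗ₘ g) ≫ (λ_ (X ⊗ X)).inv ≫ (τ ⊗ₘ 𝟙 (X ⊗ X)) ≫ (λ_ (X ⊗ X)).hom :=
  dugger_sign_rule_general X Y e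
end
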